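/- arXiv:1609.06272 — 6 statements merged into one kernel-verified Lean document; each statement's English description precedes it below -/
import Mathlib

section
/- Let H be a complex Hilbert space, let χ and η be bounded self-adjoint operators on H with 0 ≤ χ ≤ 1 and 0 ≤ η, and let q ∈ [1, 2]. Then (χ η χ)^q ≤ χ η^q χ in the Loewner order. -/
/-!
Write `χ η χ = b⋆ b` with `b = η^{1/2} χ`; then `b b⋆ = η^{1/2} χ² η^{1/2} ≤ η` because
`χ² ≤ 1`. Splitting `x^q = x^{q-1} x` and moving `b⋆` through the functional calculus
(`f(b⋆ b) b⋆ = b⋆ f(b b⋆)`, true for polynomials and hence, by Weierstrass, for continuous `f`)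
gives `(χ η χ)^q = b⋆ (b b⋆)^{q-1} b`. Since `q - 1 ∈ [0, 1]`, the Löwner–Heinz theorem yields
`(b b⋆)^{q-1} ≤ η^{q-1}`, and conjugating by `b` gives `b⋆ η^{q-1} b = χ η^q χ`.
-/

open Polynomial Filter Topology Set

theorem SemiconjBy.aeval {R A : Type*} [CommSemiring R] [Semiring A] [Algebra R A] {x a c : A}
    (h : SemiconjBy x a c) (p : R[X]) : SemiconjBy x (aeval a p) (aeval c p) := by
  induction p using Polynomial.induction_on' with
  | add p q hp hq => simpa only [map_add] using hp.add_right hq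
  | monomial n r =>
    simpa only [aeval_monomial] using
      (Algebra.commute_algebraMap_right r x).semiconjBy.mul_right (h.pow_right n)

theorem exists_seq_polynomial_tendstoUniformlyOn_Icc {f : ℝ → ℝ} {a b : ℝ}
    (hf : ContinuousOn f (Icc a b)) :
    ∃ p : ℕ → ℝ[X], TendstoUniformlyOn (fun n x ↦ (p n).eval x) f atTop (Icc a b) := by
  choose p hp using fun n : ℕ ↦
    exists_polynomial_near_of_continuousOn a b f hf (1 / (n + 1)) Nat.one_div_pos_of_nat
  refine ⟨p, Metric.tendstoUniformlyOn_iff.2 fun ε hε ↦ ?_⟩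
  obtain ⟨N, hN⟩ := exists_nat_one_div_lt hε
  filter_upwards [eventually_ge_atTop N] with n hn x hx
  rw [Real.dist_eq, abs_sub_comm]
  refine (hp n x hx).trans (lt_of_le_of_lt ?_ hN)
  gcongr

section CStarAlgebra

variable {A : Type*} [CStarAlgebra A]

theorem cfc_star_mul_self_mul_star {f : ℝ → ℝ} (hf : Continuous f) (b : A) :
    cfc f (star b * b) * star b = star b * cfc f (b * star b) := by
  obtain ⟨M, hM⟩ := ((spectrum.isCompact (𝕜 := ℝ) (star b * b)).union
    (spectrum.isCompact (𝕜 := ℝ) (b * star b))).isBounded.subset_closedBall 0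
  rw [Real.closedBall_eq_Icc, zero_sub, zero_add] at hM
  obtain ⟨p, hp⟩ :=
    exists_seq_polynomial_tendstoUniformlyOn_Icc hf.continuousOn (a := -M) (b := M)
  have hlim (a : A) (ha : spectrum ℝ a ⊆ Icc (-M) M) :
      Tendsto (fun n ↦ cfc (p n).eval a) atTop (𝓝 (cfc f a)) :=
    tendsto_cfc_fun (hp.mono ha) (.of_forall fun n ↦ (p n).continuousOn)
  have hpoly (n : ℕ) :
      cfc (p n).eval (star b * b) * star b = star b * cfc (p n).eval (b * star b) := by
    rw [cfc_polynomial (p n) (star b * b), cfc_polynomial (p n) (b * star b)]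
    exact (SemiconjBy.aeval (mul_assoc _ _ _).symm (p n)).eq.symm
  refine tendsto_nhds_unique ?_
    ((hlim _ (subset_union_right.trans hM)).const_mul (star b))
  simpa only [hpoly] using (hlim _ (subset_union_left.trans hM)).mul_const (star b)

variable [PartialOrder A] [StarOrderedRing A]

theorem cfc_rpow_eq_cfc_rpow_sub_one_mul {a : A} (ha : 0 ≤ a) {q : ℝ} (hq : 1 ≤ q) :
    cfc (fun x : ℝ ↦ x ^ q) a = cfc (fun x : ℝ ↦ x ^ (q - 1)) a * a := by
  conv_rhs => enter [2]; rw [← cfc_id' ℝ a]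
  rw [← cfc_mul _ _ a (by fun_prop (disch := linarith))]
  refine cfc_congr fun x hx ↦ ?_
  rw [← Real.rpow_add_one' (spectrum_nonneg_of_nonneg ha hx) (by linarith), sub_add_cancel]

theorem cfc_sqrt_mul_cfc_mul_cfc_sqrt {a : A} (ha : 0 ≤ a) {f : ℝ → ℝ}
    (hf : ContinuousOn f (spectrum ℝ a)) :
    cfc Real.sqrt a * cfc f a * cfc Real.sqrt a = cfc f a * a := by
  conv_rhs => enter [2]; rw [← cfc_id' ℝ a]
  rw [← cfc_mul _ _ a, ← cfc_mul _ _ a, ← cfc_mul _ _ a]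
  refine cfc_congr fun x hx ↦ ?_
  rw [mul_comm √x, mul_assoc, Real.mul_self_sqrt (spectrum_nonneg_of_nonneg ha hx)]

theorem cfc_sqrt_mul_self {a : A} (ha : 0 ≤ a) : cfc Real.sqrt a * cfc Real.sqrt a = a := by
  simpa only [cfc_const_one ℝ a, mul_one, one_mul] using
    cfc_sqrt_mul_cfc_mul_cfc_sqrt ha (f := fun _ ↦ 1) continuousOn_const

theorem cfc_rpow_mul_le_star_mul_cfc_rpow_mul {b c : A} (hbc : b * star b ≤ c) {r : ℝ}
    (hr : r ∈ Icc 0 1) :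
    cfc (fun x : ℝ ↦ x ^ r) (star b * b) * (star b * b) ≤
      star b * cfc (fun x : ℝ ↦ x ^ r) c * b := by
  have hc : 0 ≤ c := (mul_star_self_nonneg b).trans hbc
  have hmono : cfc (fun x : ℝ ↦ x ^ r) (b * star b) ≤ cfc (fun x : ℝ ↦ x ^ r) c := by
    rw [← CFC.rpow_eq_cfc_real (mul_star_self_nonneg b), ← CFC.rpow_eq_cfc_real hc]
    exact CFC.rpow_le_rpow hr hbc
  rw [← mul_assoc, cfc_star_mul_self_mul_star (by fun_prop (disch := exact hr.1)) b]
  exact star_left_conjugate_le_conjugate hmono b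

theorem mul_self_le_one_of_nonneg_of_le_one {a : A} (ha₀ : 0 ≤ a) (ha₁ : a ≤ 1) :
    a * a ≤ 1 :=
  calc a * a = a ^ 2 := (sq a).symm
    _ ≤ a ^ 1 := CStarAlgebra.pow_antitone ha₀ ha₁ one_le_two
    _ ≤ 1 := (pow_one a).trans_le ha₁

theorem cfc_rpow_conj_le_conj_cfc_rpow {χ η : A} (hχ₀ : 0 ≤ χ) (hχ₁ : χ ≤ 1)
    (hη : 0 ≤ η) {q : ℝ} (hq : q ∈ Icc 1 2) :
    cfc (fun x : ℝ ↦ x ^ q) (χ * η * χ) ≤ χ * cfc (fun x : ℝ ↦ x ^ q) η * χ := by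
  set s := cfc Real.sqrt η
  have hs : IsSelfAdjoint s := .cfc
  have hstar : star (s * χ) = χ * s := by
    rw [star_mul, hs.star_eq, (IsSelfAdjoint.of_nonneg hχ₀).star_eq]
  have hb : star (s * χ) * (s * χ) = χ * η * χ := by
    rw [hstar, mul_assoc χ s, ← mul_assoc s, cfc_sqrt_mul_self hη, mul_assoc]
  have hb' : s * χ * star (s * χ) ≤ η :=
    calc s * χ * star (s * χ) = star s * (χ * χ) * s := by
          rw [hstar, hs.star_eq]; simp only [mul_assoc]
      _ ≤ star s * 1 * s :=
        star_left_conjugate_le_conjugate (mul_self_le_one_of_nonneg_of_le_one hχ₀ hχ₁) s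
      _ = η := by rw [hs.star_eq, mul_one, cfc_sqrt_mul_self hη]
  calc cfc (fun x : ℝ ↦ x ^ q) (χ * η * χ)
      = cfc (fun x : ℝ ↦ x ^ (q - 1)) (χ * η * χ) * (χ * η * χ) :=
        cfc_rpow_eq_cfc_rpow_sub_one_mul (hb ▸ star_mul_self_nonneg _) hq.1
    _ ≤ star (s * χ) * cfc (fun x : ℝ ↦ x ^ (q - 1)) η * (s * χ) := by
        rw [← hb]
        exact cfc_rpow_mul_le_star_mul_cfc_rpow_mul hb' ⟨by linarith [hq.1], by linarith [hq.2]⟩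
    _ = χ * (s * cfc (fun x : ℝ ↦ x ^ (q - 1)) η * s) * χ := by
        rw [hstar]; simp only [mul_assoc]
    _ = χ * cfc (fun x : ℝ ↦ x ^ q) η * χ := by
        rw [cfc_sqrt_mul_cfc_mul_cfc_sqrt hη (by fun_prop (disch := linarith [hq.1])),
          ← cfc_rpow_eq_cfc_rpow_sub_one_mul hη hq.1]

end CStarAlgebra

theorem pow_chi_le_chi_pow_general {H : Type*} [NormedAddCommGroup H] [InnerProductSpace ℂ H]
    [CompleteSpace H] (χ η : H →L[ℂ] H)
    (hχ0 : (0 : H →L[ℂ] H) ≤ χ) (hχ1 : χ ≤ 1) (hη0 : (0 : H →L[ℂ] H) ≤ η)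
    (q : ℝ) (hq : q ∈ Set.Icc (1 : ℝ) 2) :
    cfc (fun x : ℝ => x ^ q) (χ * η * χ) ≤ χ * cfc (fun x : ℝ => x ^ q) η * χ :=
  cfc_rpow_conj_le_conj_cfc_rpow hχ0 hχ1 hη0 hq

/-- **Loewner order inequality for powers `q ∈ [1, 2]`.**
If `χ, η` are bounded self-adjoint operators on a complex Hilbert space `H` with
`0 ≤ χ ≤ 1` and `0 ≤ η` (Loewner order), and `q ∈ [1, 2]`, then
`(χ η χ)^q ≤ χ η^q χ`, where powers are taken via the continuous functional calculus. -/
theorem pow_chi_le_chi_pow {H : Type*} [NormedAddCommGroup H] [InnerProductSpace ℂ H]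
    [CompleteSpace H] (χ η : H →L[ℂ] H)
    (hχsa : IsSelfAdjoint χ) (hηsa : IsSelfAdjoint η)
    (hχ0 : (0 : H →L[ℂ] H) ≤ χ) (hχ1 : χ ≤ 1) (hη0 : (0 : H →L[ℂ] H) ≤ η)
    (q : ℝ) (hq : q ∈ Set.Icc (1 : ℝ) 2) :
    cfc (fun x : ℝ => x ^ q) (χ * η * χ) ≤ χ * cfc (fun x : ℝ => x ^ q) η * χ :=
  pow_chi_le_chi_pow_general χ η hχ0 hχ1 hη0 q hq
end

section
/- Let H be a complex Hilbert space and let χ and γ be bounded self-adjoint operators on H with 0 ≤ χ ≤ 1 and 0 ≤ γ. Then χ γ^{1/2} χ ≤ (χ γ χ)^{1/2} in the Loewner order. -/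
/-!
Write `s = γ^{1/2}`. Since `χ² ≤ 1`, conjugating twice gives
`(χ s χ)² = χ s χ² s χ ≤ χ s² χ = χ γ χ`, and the operator monotonicity of the square root turns
this into `χ s χ = ((χ s χ)²)^{1/2} ≤ (χ γ χ)^{1/2}`.
-/

open CFC

lemma IsSelfAdjoint.mul_self_conjugate_le {R : Type*} [Semiring R] [StarRing R] [PartialOrder R]
    [StarOrderedRing R] {c s : R} (hc : IsSelfAdjoint c) (hs : IsSelfAdjoint s)
    (hcc : c * c ≤ 1) :
    (c * s * c) * (c * s * c) ≤ c * (s * s) * c :=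
  calc (c * s * c) * (c * s * c) = c * (s * (c * c) * s) * c := by simp only [mul_assoc]
    _ ≤ c * (s * 1 * s) * c := hc.conjugate_le_conjugate (hs.conjugate_le_conjugate hcc)
    _ = c * (s * s) * c := by rw [mul_one]

section CStarAlgebra

variable {A : Type*} [CStarAlgebra A] [PartialOrder A] [StarOrderedRing A]

lemma CFC.cfc_rpow_one_half_eq_sqrt {a : A} (ha : 0 ≤ a) :
    cfc (fun x : ℝ => x ^ (1 / 2 : ℝ)) a = sqrt a :=
  (rpow_eq_cfc_real ha).symm.trans sqrt_eq_rpow.symm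

lemma CFC.conjugate_sqrt_le_sqrt_conjugate {c b : A} (hc₀ : 0 ≤ c) (hc₁ : c ≤ 1) (hb : 0 ≤ b) :
    c * sqrt b * c ≤ sqrt (c * b * c) := by
  have hcc : c * c ≤ 1 := by
    simpa [sq] using CStarAlgebra.pow_antitone hc₀ hc₁ (Nat.zero_le 2)
  have hsq : (c * sqrt b * c) * (c * sqrt b * c) ≤ c * b * c := by
    simpa only [sqrt_mul_sqrt_self b hb] using
      (IsSelfAdjoint.of_nonneg hc₀).mul_self_conjugate_le (sqrt_nonneg b).isSelfAdjoint hcc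
  calc c * sqrt b * c = sqrt ((c * sqrt b * c) * (c * sqrt b * c)) :=
        (sqrt_mul_self _ (conjugate_nonneg_of_nonneg (sqrt_nonneg b) hc₀)).symm
    _ ≤ sqrt (c * b * c) := sqrt_le_sqrt _ _ hsq

end CStarAlgebra

theorem chi_sqrt_chi_le_general {H : Type*} [NormedAddCommGroup H] [InnerProductSpace ℂ H]
    [CompleteSpace H] (χ γ : H →L[ℂ] H)
    (hχ0 : (0 : H →L[ℂ] H) ≤ χ) (hχ1 : χ ≤ 1) (hγ0 : (0 : H →L[ℂ] H) ≤ γ) :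
    χ * cfc (fun x : ℝ => x ^ (1 / 2 : ℝ)) γ * χ ≤
      cfc (fun x : ℝ => x ^ (1 / 2 : ℝ)) (χ * γ * χ) := by
  rw [cfc_rpow_one_half_eq_sqrt hγ0,
    cfc_rpow_one_half_eq_sqrt (conjugate_nonneg_of_nonneg hγ0 hχ0)]
  exact conjugate_sqrt_le_sqrt_conjugate hχ0 hχ1 hγ0

/-- **Loewner order inequality for the square root.**
If `χ, γ` are bounded self-adjoint operators on a complex Hilbert space `H` with
`0 ≤ χ ≤ 1` and `0 ≤ γ` (Loewner order), then `χ γ^{1/2} χ ≤ (χ γ χ)^{1/2}`, where the square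
root is taken via the continuous functional calculus. -/
theorem chi_sqrt_chi_le {H : Type*} [NormedAddCommGroup H] [InnerProductSpace ℂ H]
    [CompleteSpace H] (χ γ : H →L[ℂ] H)
    (hχsa : IsSelfAdjoint χ) (hγsa : IsSelfAdjoint γ)
    (hχ0 : (0 : H →L[ℂ] H) ≤ χ) (hχ1 : χ ≤ 1) (hγ0 : (0 : H →L[ℂ] H) ≤ γ) :
    χ * cfc (fun x : ℝ => x ^ (1 / 2 : ℝ)) γ * χ ≤
      cfc (fun x : ℝ => x ^ (1 / 2 : ℝ)) (χ * γ * χ) :=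
  chi_sqrt_chi_le_general χ γ hχ0 hχ1 hγ0
end

section
/- Let H be a complex Hilbert space, let χ and η be bounded self-adjoint operators on H with 0 ≤ χ ≤ 1 and 0 ≤ η, and let z > 0 be a real number. Then the operators χηχ + z·1 and η + z·1 are invertible and χ (χηχ + z·1)^{-1} χ ≤ (η + z·1)^{-1} in the Loewner order. -/
/-!
Write `A = χηχ + z` and `B = η + z`. Since `0 ≤ χ ≤ 1` forces `χ² ≤ 1`, we get `χBχ ≤ A`.
For `X = B^{1/2} χ A^{-1/2}` this says `X⋆X ≤ 1`, i.e. `‖X‖ ≤ 1`, hence also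
`XX⋆ = B^{1/2} (χA⁻¹χ) B^{1/2} ≤ 1`, and conjugating by `B^{-1/2}` gives `χA⁻¹χ ≤ B⁻¹`.
-/

open CFC Ring

namespace CStarAlgebra

variable {A : Type*} [CStarAlgebra A] [PartialOrder A] [StarOrderedRing A]

lemma star_mul_self_le_one_iff (x : A) : star x * x ≤ 1 ↔ ‖x‖ ≤ 1 := by
  rw [← norm_le_one_iff_of_nonneg _ (star_mul_self_nonneg x), CStarRing.norm_star_mul_self,
    ← sq, sq_le_one_iff₀ (norm_nonneg x)]

lemma mul_star_self_le_one_iff (x : A) : x * star x ≤ 1 ↔ ‖x‖ ≤ 1 := by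
  simpa using star_mul_self_le_one_iff (star x)

lemma mul_self_le_one_of_nonneg_of_le_one {c : A} (hc₀ : 0 ≤ c) (hc₁ : c ≤ 1) : c * c ≤ 1 := by
  simpa [hc₀.isSelfAdjoint.star_eq] using
    (star_mul_self_le_one_iff c).2 ((norm_le_one_iff_of_nonneg c hc₀).2 hc₁)

lemma mul_ringInverse_mul_star_le_ringInverse {a b c : A} (ha : IsStrictlyPositive a)
    (hb : IsStrictlyPositive b) (h : star c * b * c ≤ a) : c * a⁻¹ʳ * star c ≤ b⁻¹ʳ := by
  set x := sqrt b * c * sqrt a⁻¹ʳ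
  have hx : star x * x ≤ 1 := calc
    star x * x = conjSqrt a⁻¹ʳ (star c * b * c) := by
      rw [conjSqrt_apply, ← sqrt_mul_sqrt_self b]
      simp [x, star_mul, (sqrt_nonneg b).isSelfAdjoint.star_eq,
        (sqrt_nonneg a⁻¹ʳ).isSelfAdjoint.star_eq, mul_assoc]
    _ ≤ conjSqrt a⁻¹ʳ a := conjSqrt_le_conjSqrt h
    _ = 1 := conjSqrt_ringInverse_self a
  have hx' : conjSqrt b (c * a⁻¹ʳ * star c) ≤ 1 := by
    convert (mul_star_self_le_one_iff x).2 ((star_mul_self_le_one_iff x).1 hx) using 1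
    rw [conjSqrt_apply, ← sqrt_mul_sqrt_self a⁻¹ʳ]
    simp [x, star_mul, (sqrt_nonneg b).isSelfAdjoint.star_eq,
      (sqrt_nonneg a⁻¹ʳ).isSelfAdjoint.star_eq, mul_assoc]
  calc c * a⁻¹ʳ * star c = conjSqrt b⁻¹ʳ (conjSqrt b (c * a⁻¹ʳ * star c)) :=
        (conjSqrt_ringInverse_conjSqrt b _).symm
    _ ≤ conjSqrt b⁻¹ʳ 1 := conjSqrt_le_conjSqrt hx'
    _ = b⁻¹ʳ := conjSqrt_one _ hb.ringInverse.nonneg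

lemma star_mul_add_smul_one_mul_le {c : A} (hc₀ : 0 ≤ c) (hc₁ : c ≤ 1) (e : A) {z : ℝ}
    (hz : 0 ≤ z) :
    star c * (e + z • 1) * c ≤ c * e * c + z • 1 := by
  rw [hc₀.isSelfAdjoint.star_eq, mul_add, add_mul, mul_smul_one, smul_mul_assoc]
  gcongr
  exact mul_self_le_one_of_nonneg_of_le_one hc₀ hc₁

end CStarAlgebra

open CStarAlgebra in
theorem chi_resolvent_chi_le_general {H : Type*} [NormedAddCommGroup H] [InnerProductSpace ℂ H]
    [CompleteSpace H] (χ η : H →L[ℂ] H)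
    (hχ0 : (0 : H →L[ℂ] H) ≤ χ) (hχ1 : χ ≤ 1) (hη0 : (0 : H →L[ℂ] H) ≤ η)
    (z : ℝ) (hz : 0 < z) :
    IsUnit (χ * η * χ + z • (1 : H →L[ℂ] H)) ∧ IsUnit (η + z • (1 : H →L[ℂ] H)) ∧
      χ * Ring.inverse (χ * η * χ + z • (1 : H →L[ℂ] H)) * χ ≤
        Ring.inverse (η + z • (1 : H →L[ℂ] H)) := by
  have hχ : star χ = χ := hχ0.isSelfAdjoint.star_eq
  have hz1 : IsStrictlyPositive (z • (1 : H →L[ℂ] H)) := .smul hz isStrictlyPositive_one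
  have hA : IsStrictlyPositive (χ * η * χ + z • 1) :=
    hz1.nonneg_add (by simpa [hχ] using star_left_conjugate_nonneg hη0 χ)
  have hB : IsStrictlyPositive (η + z • 1) := hz1.nonneg_add hη0
  refine ⟨hA.isUnit, hB.isUnit, ?_⟩
  simpa [hχ] using mul_ringInverse_mul_star_le_ringInverse hA hB
    (star_mul_add_smul_one_mul_le hχ0 hχ1 η hz.le)

/-- **Resolvent inequality in the Loewner order.**
If `χ, η` are bounded self-adjoint operators on a complex Hilbert space `H` with
`0 ≤ χ ≤ 1` and `0 ≤ η` (Loewner order), and `z > 0`, then `χηχ + z·1` and `η + z·1` are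
invertible and `χ (χηχ + z·1)⁻¹ χ ≤ (η + z·1)⁻¹`. -/
theorem chi_resolvent_chi_le {H : Type*} [NormedAddCommGroup H] [InnerProductSpace ℂ H]
    [CompleteSpace H] (χ η : H →L[ℂ] H)
    (hχsa : IsSelfAdjoint χ) (hηsa : IsSelfAdjoint η)
    (hχ0 : (0 : H →L[ℂ] H) ≤ χ) (hχ1 : χ ≤ 1) (hη0 : (0 : H →L[ℂ] H) ≤ η)
    (z : ℝ) (hz : 0 < z) :
    IsUnit (χ * η * χ + z • (1 : H →L[ℂ] H)) ∧ IsUnit (η + z • (1 : H →L[ℂ] H)) ∧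
      χ * Ring.inverse (χ * η * χ + z • (1 : H →L[ℂ] H)) * χ ≤
        Ring.inverse (η + z • (1 : H →L[ℂ] H)) :=
  chi_resolvent_chi_le_general χ η hχ0 hχ1 hη0 z hz
end

section
/- Let H be a complex Hilbert space, let C be a positive bounded self-adjoint operator on H, and let q ∈ (1, 2). Then there is a constant c_q > 0, depending only on q (namely c_q = sin(π(q−1))/π), such that C^q = c_q · ∫₀^∞ C² (C + z·1)^{-1} z^{q−2} dz, where the integral is a Bochner integral in the space of bounded operators on H with the operator norm (note that C + z·1 is invertible for every z > 0 and the integrand has operator norm at most min(‖C‖^q · z^{q−2}, ‖C‖² · z^{q−3}), so it is Bochner integrable). -/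
/-!
For `1 < p < 2` and `x ≥ 0` one has `∫₀^∞ t^(p-2) x² / (x + t) dt = π / sin (π (p - 1)) · x^p`:
after the scaling `t = x s` the constant is the Beta integral
`B(p - 1, 2 - p) = Γ(p - 1) Γ(2 - p) = π / sin (π (p - 1))` (Euler's reflection formula), brought
to the half-line by the substitution `s = u / (1 - u)`.
For fixed `t > 0` the functional calculus sends `x ↦ t^(p-2) x² / (x + t)` to
`t^(p-2) C² (C + t)⁻¹`, and on the spectrum `⊆ [0, ‖C‖]` the integrand is dominated by its value
at `‖C‖`, so the functional calculus commutes with the integral over `t`.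
-/

open MeasureTheory Set Real

theorem integral_Ioo_rpow_mul_one_sub_rpow {α β : ℝ} (hα : 0 < α) (hβ : 0 < β) :
    ∫ x in Ioo (0 : ℝ) 1, x ^ (α - 1) * (1 - x) ^ (β - 1) = Gamma α * Gamma β / Gamma (α + β) := by
  have hB := Complex.betaIntegral_eq_Gamma_mul_div α β (by simpa) (by simpa)
  rw [Complex.betaIntegral, intervalIntegral.integral_of_le zero_le_one,
    integral_Ioc_eq_integral_Ioo] at hB
  apply Complex.ofReal_injective
  rw [← integral_complex_ofReal, setIntegral_congr_fun measurableSet_Ioo fun x hx => ?_, hB]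
  · push_cast [← Complex.ofReal_add, Complex.Gamma_ofReal]
    rfl
  rw [Complex.ofReal_mul, Complex.ofReal_cpow hx.1.le, Complex.ofReal_cpow (sub_nonneg.2 hx.2.le)]
  push_cast
  rfl

lemma image_div_one_sub_Ioo : (fun x : ℝ => x / (1 - x)) '' Ioo 0 1 = Ioi 0 := by
  ext t
  constructor
  · rintro ⟨x, ⟨hx0, hx1⟩, rfl⟩
    exact div_pos hx0 (sub_pos.2 hx1)
  · intro (ht : 0 < t)
    refine ⟨t / (1 + t), ⟨by positivity, (div_lt_one (by positivity)).2 (by linarith)⟩, ?_⟩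
    field_simp
    ring

lemma injOn_div_one_sub : InjOn (fun x : ℝ => x / (1 - x)) (Iio 1) := by
  intro a (ha : a < 1) b (hb : b < 1) hab
  have := sub_pos.2 ha
  have := sub_pos.2 hb
  field_simp at hab
  linarith

lemma hasDerivAt_div_one_sub {x : ℝ} (hx : x ≠ 1) :
    HasDerivAt (fun x : ℝ => x / (1 - x)) ((1 - x) ^ 2)⁻¹ x := by
  have h1x : 1 - x ≠ 0 := sub_ne_zero.2 (Ne.symm hx)
  refine ((hasDerivAt_id' x).fun_div ((hasDerivAt_id' x).const_sub 1) h1x).congr_deriv ?_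
  field_simp
  ring

theorem integral_Ioi_rpow_mul_one_add_rpow {α β : ℝ} (hα : 0 < α) (hβ : 0 < β) :
    ∫ t in Ioi (0 : ℝ), t ^ (α - 1) * (1 + t) ^ (-(α + β)) =
      Gamma α * Gamma β / Gamma (α + β) := by
  rw [← image_div_one_sub_Ioo, integral_image_eq_integral_abs_deriv_smul measurableSet_Ioo
    (fun x hx => (hasDerivAt_div_one_sub hx.2.ne).hasDerivWithinAt)
    (injOn_div_one_sub.mono fun x hx => hx.2), ← integral_Ioo_rpow_mul_one_sub_rpow hα hβ]
  refine setIntegral_congr_fun measurableSet_Ioo fun x ⟨hx0, hx1⟩ => ?_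
  have hu : 0 < 1 - x := sub_pos.2 hx1
  have h1 : 1 + x / (1 - x) = (1 - x)⁻¹ := by field_simp; ring
  have h2 : (1 - x) ^ (α + β) = (1 - x) ^ (α - 1) * (1 - x) ^ (β - 1) * (1 - x) ^ 2 := by
    rw [← rpow_natCast, ← rpow_add hu, ← rpow_add hu]
    congr 1
    push_cast
    ring
  rw [smul_eq_mul, h1, inv_rpow hu.le, rpow_neg hu.le, inv_inv, h2,
    div_rpow hx0.le hu.le, abs_of_pos (by positivity)]
  have : (1 - x) ^ (α - 1) ≠ 0 := by positivity
  field_simp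

theorem integral_rpowIntegrand₀₁_one {p : ℝ} (hp : p ∈ Ioo 0 1) :
    ∫ t in Ioi 0, rpowIntegrand₀₁ p t 1 = π / sin (π * p) := calc
  _ = ∫ t in Ioi 0, t ^ (p - 1) * (1 + t) ^ (-(p + (1 - p))) := by
    refine setIntegral_congr_fun measurableSet_Ioi fun t (ht : 0 < t) => ?_
    rw [rpowIntegrand₀₁_eq_pow_div hp ht.le zero_le_one, add_sub_cancel, rpow_neg_one, add_comm]
    ring
  _ = π / sin (π * p) := by
    rw [integral_Ioi_rpow_mul_one_add_rpow hp.1 (sub_pos.2 hp.2), add_sub_cancel, Gamma_one,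
      div_one, Gamma_mul_Gamma_one_sub]

lemma sin_pi_mul_pos {s : ℝ} (hs : s ∈ Ioo 0 1) : 0 < sin (π * s) :=
  sin_pos_of_pos_of_lt_pi (mul_pos pi_pos hs.1) (mul_lt_of_lt_one_right pi_pos hs.2)

theorem integral_rpowIntegrand₁₂ {p x : ℝ} (hp : p ∈ Ioo 1 2) (hx : 0 ≤ x) :
    ∫ t in Ioi 0, rpowIntegrand₁₂ p t x = π / sin (π * (p - 1)) * x ^ p := by
  have hp' : p - 1 ∈ Ioo 0 1 := ⟨sub_pos.2 hp.1, by linarith [hp.2]⟩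
  rw [rpow_eq_const_mul_integral_rpowIntegrand₁₂ hp hx, integral_rpowIntegrand₀₁_one hp',
    inv_div]
  have := (sin_pi_mul_pos hp').ne'
  field_simp

lemma rpowIntegrand₁₂_eq_rpow_mul_sq_mul_inv {p t x : ℝ} (ht : 0 < t) (hx : 0 ≤ x) :
    rpowIntegrand₁₂ p t x = t ^ (p - 2) * (x ^ 2 * (x + t)⁻¹) := by
  have : t ^ (p - 1) = t ^ (p - 2) * t := by
    rw [← rpow_add_one ht.ne']
    ring_nf
  rw [rpowIntegrand₁₂, this]
  field_simp
  ring

section CStarAlgebra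

variable {A : Type*} [CStarAlgebra A] [PartialOrder A] [StarOrderedRing A] {a : A}

lemma isUnit_add_smul_one (ha : 0 ≤ a) {t : ℝ} (ht : 0 < t) : IsUnit (a + t • (1 : A)) := by
  rw [← Algebra.algebraMap_eq_smul_one]
  exact (IsStrictlyPositive.nonneg_add ha (isStrictlyPositive_algebraMap ht)).isUnit

lemma cfc_rpowIntegrand₁₂ (ha : 0 ≤ a) {p t : ℝ} (ht : 0 < t) :
    cfc (rpowIntegrand₁₂ p t) a = t ^ (p - 2) • (a ^ 2 * Ring.inverse (a + t • 1)) := by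
  have hspec : ∀ x ∈ spectrum ℝ a, x + t ≠ 0 := fun x hx => by
    linarith [spectrum_nonneg_of_nonneg ha hx]
  have hinv : ContinuousOn (fun x : ℝ => (x + t)⁻¹) (spectrum ℝ a) :=
    (continuousOn_id.add continuousOn_const).inv₀ hspec
  rw [cfc_congr fun x hx => rpowIntegrand₁₂_eq_rpow_mul_sq_mul_inv ht
      (spectrum_nonneg_of_nonneg ha hx),
    cfc_const_mul _ (fun x => x ^ 2 * (x + t)⁻¹) a ((continuousOn_pow 2).mul hinv),
    cfc_mul (fun x => x ^ 2) _ a (continuousOn_pow 2) hinv, cfc_pow_id a 2,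
    cfc_inv (fun x => x + t) a hspec,
    cfc_add_const t (fun x => x) a, cfc_id' ℝ a, Algebra.algebraMap_eq_smul_one]

lemma norm_rpowIntegrand₁₂_le (ha : 0 ≤ a) {p t x : ℝ} (hp : p ∈ Ioo 1 2) (ht : 0 < t)
    (hx : x ∈ spectrum ℝ a) : ‖rpowIntegrand₁₂ p t x‖ ≤ rpowIntegrand₁₂ p t ‖a‖ := by
  rcases subsingleton_or_nontrivial A with _ | _
  · simp [spectrum.of_subsingleton] at hx
  have hx0 := spectrum_nonneg_of_nonneg ha hx
  rw [norm_of_nonneg (rpowIntegrand₁₂_nonneg hp.1 ht.le hx0)]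
  exact monotoneOn_rpowIntegrand₁₂ hp ht hx0 (norm_nonneg a)
    ((le_abs_self x).trans (spectrum.norm_le_norm_of_mem hx))

lemma integrableOn_cfc_rpowIntegrand₁₂ (ha : 0 ≤ a) {p : ℝ} (hp : p ∈ Ioo 1 2) :
    IntegrableOn (fun t => cfc (rpowIntegrand₁₂ p t) a) (Ioi 0) :=
  integrableOn_cfc measurableSet_Ioi _ (rpowIntegrand₁₂ p · ‖a‖) a
    (continuousOn_rpowIntegrand₁₂_uncurry hp.1 _ fun _ hx => spectrum_nonneg_of_nonneg ha hx)
    (ae_restrict_of_forall_mem measurableSet_Ioi fun _ ht _ hx =>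
      norm_rpowIntegrand₁₂_le ha hp ht hx)
    (integrableOn_rpowIntegrand₁₂ hp (norm_nonneg a)).hasFiniteIntegral

lemma integral_cfc_rpowIntegrand₁₂ (ha : 0 ≤ a) {p : ℝ} (hp : p ∈ Ioo 1 2) :
    ∫ t in Ioi 0, cfc (rpowIntegrand₁₂ p t) a =
      (π / sin (π * (p - 1))) • cfc (fun x : ℝ => x ^ p) a := by
  rw [← cfc_setIntegral measurableSet_Ioi _ (rpowIntegrand₁₂ p · ‖a‖) a
    (continuousOn_rpowIntegrand₁₂_uncurry hp.1 _ fun _ hx => spectrum_nonneg_of_nonneg ha hx)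
    (ae_restrict_of_forall_mem measurableSet_Ioi fun _ ht _ hx =>
      norm_rpowIntegrand₁₂_le ha hp ht hx)
    (integrableOn_rpowIntegrand₁₂ hp (norm_nonneg a)).hasFiniteIntegral,
    cfc_congr fun x hx => integral_rpowIntegrand₁₂ hp (spectrum_nonneg_of_nonneg ha hx),
    cfc_const_mul _ (fun x : ℝ => x ^ p) a
      (continuous_rpow_const (by linarith [hp.1])).continuousOn]

end CStarAlgebra

theorem cfc_rpow_eq_integral_resolvent_general {H : Type*} [NormedAddCommGroup H]
    [InnerProductSpace ℂ H] [CompleteSpace H] (C : H →L[ℂ] H)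
    (hC0 : (0 : H →L[ℂ] H) ≤ C)
    (q : ℝ) (hq : q ∈ Set.Ioo (1 : ℝ) 2) :
    0 < Real.sin (Real.pi * (q - 1)) / Real.pi ∧
    (∀ z : ℝ, 0 < z → IsUnit (C + z • (1 : H →L[ℂ] H))) ∧
    IntegrableOn
      (fun z : ℝ => z ^ (q - 2) • (C ^ 2 * Ring.inverse (C + z • (1 : H →L[ℂ] H))))
      (Set.Ioi 0) volume ∧
    cfc (fun x : ℝ => x ^ q) C =
      (Real.sin (Real.pi * (q - 1)) / Real.pi) •
        ∫ z in Set.Ioi (0 : ℝ),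
          z ^ (q - 2) • (C ^ 2 * Ring.inverse (C + z • (1 : H →L[ℂ] H))) := by
  have hsin : 0 < sin (π * (q - 1)) := sin_pi_mul_pos ⟨sub_pos.2 hq.1, by linarith [hq.2]⟩
  have hresolvent : EqOn (fun t => cfc (rpowIntegrand₁₂ q t) C)
      (fun z : ℝ => z ^ (q - 2) • (C ^ 2 * Ring.inverse (C + z • (1 : H →L[ℂ] H)))) (Ioi 0) :=
    fun _ ht => cfc_rpowIntegrand₁₂ hC0 ht
  refine ⟨div_pos hsin pi_pos, fun _ hz => isUnit_add_smul_one hC0 hz,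
    (integrableOn_cfc_rpowIntegrand₁₂ hC0 hq).congr_fun hresolvent measurableSet_Ioi, ?_⟩
  rw [← setIntegral_congr_fun measurableSet_Ioi hresolvent, integral_cfc_rpowIntegrand₁₂ hC0 hq,
    smul_smul, div_mul_div_cancel₀ pi_ne_zero, div_self hsin.ne', one_smul]

/-- **Integral representation of operator powers `C^q`, `q ∈ (1, 2)`.**
For a positive bounded self-adjoint operator `C` on a complex Hilbert space and `q ∈ (1, 2)`,
with the constant `c_q = sin(π(q−1))/π > 0` one has
`C^q = c_q ∫₀^∞ C² (C + z·1)⁻¹ z^{q−2} dz` (a Bochner integral in the operator norm);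
moreover `C + z·1` is invertible for every `z > 0` and the integrand is Bochner integrable. -/
theorem cfc_rpow_eq_integral_resolvent {H : Type*} [NormedAddCommGroup H]
    [InnerProductSpace ℂ H] [CompleteSpace H] (C : H →L[ℂ] H)
    (hCsa : IsSelfAdjoint C) (hC0 : (0 : H →L[ℂ] H) ≤ C)
    (q : ℝ) (hq : q ∈ Set.Ioo (1 : ℝ) 2) :
    0 < Real.sin (Real.pi * (q - 1)) / Real.pi ∧
    (∀ z : ℝ, 0 < z → IsUnit (C + z • (1 : H →L[ℂ] H))) ∧
    IntegrableOn
      (fun z : ℝ => z ^ (q - 2) • (C ^ 2 * Ring.inverse (C + z • (1 : H →L[ℂ] H))))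
      (Set.Ioi 0) volume ∧
    cfc (fun x : ℝ => x ^ q) C =
      (Real.sin (Real.pi * (q - 1)) / Real.pi) •
        ∫ z in Set.Ioi (0 : ℝ),
          z ^ (q - 2) • (C ^ 2 * Ring.inverse (C + z • (1 : H →L[ℂ] H))) :=
  cfc_rpow_eq_integral_resolvent_general C hC0 q hq
end

section
/- (Hardy's inequality in ℝ³.) For every smooth compactly supported function u : ℝ³ → ℂ, ∫_{ℝ³} |∇u(x)|² dx ≥ (1/4) ∫_{ℝ³} |u(x)|² / |x|² dx. -/
open MeasureTheory

open MeasureTheory Set Metric intervalIntegral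
open scoped ENNReal RealInnerProductSpace

lemma hardy1D (g : ℝ → ℂ) (hg : ContDiff ℝ (⊤ : ℕ∞) g) (hcs : HasCompactSupport g) :
    ∫⁻ r in Ioi (0:ℝ), ENNReal.ofReal (‖g r‖ ^ 2) ≤
      4 * ∫⁻ r in Ioi (0:ℝ), ENNReal.ofReal (‖deriv g r‖ ^ 2 * r ^ 2) := by
  obtain ⟨R, hR⟩ := hcs.isBounded.subset_closedBall 0
  set S : ℝ := max R 0 + 1 with hSdef
  have hS : 0 < S := by positivity
  have hnm : ∀ r : ℝ, S ≤ |r| → r ∉ tsupport g := by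
    intro r hr hmem
    have h1 := hR hmem
    rw [mem_closedBall, Real.dist_eq, sub_zero] at h1
    have : R ≤ max R 0 := le_max_left _ _
    simp only [hSdef] at hr
    linarith
  have hgz : ∀ r : ℝ, S ≤ |r| → g r = 0 := fun r hr =>
    image_eq_zero_of_notMem_tsupport (hnm r hr)
  have hg'z : ∀ r : ℝ, S ≤ |r| → deriv g r = 0 := fun r hr => by
    by_contra h
    exact hnm r hr (support_deriv_subset (Function.mem_support.2 h))
  have hgc : Continuous g := hg.continuous
  have hg'c : Continuous (deriv g) := hg.continuous_deriv (by simp)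
  have hdiff : ∀ t : ℝ, HasDerivAt g (deriv g t) t := fun t =>
    (hg.differentiable (by simp) t).hasDerivAt
  have hf1c : Continuous fun t : ℝ => ‖g t‖ ^ 2 := hgc.norm.pow 2
  have hf2c : Continuous fun t : ℝ => ‖deriv g t‖ ^ 2 * t ^ 2 :=
    (hg'c.norm.pow 2).mul (continuous_pow 2)
  have hinnc : Continuous fun t : ℝ => ⟪g t, deriv g t⟫ := hgc.inner hg'c
  -- integration by parts: ∫ (‖g‖² + t(2⟪g,g'⟫)) = [t‖g t‖²]₀^S = 0
  have key1 : ∫ t in (0:ℝ)..S, (‖g t‖ ^ 2 + t * (2 * ⟪g t, deriv g t⟫)) = 0 := by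
    have hD : ∀ t ∈ uIcc (0:ℝ) S,
        HasDerivAt (fun t => t * ‖g t‖ ^ 2)
          (‖g t‖ ^ 2 + t * (2 * ⟪g t, deriv g t⟫)) t := by
      intro t _
      have h1 := (hasDerivAt_id t).mul (hdiff t).norm_sq
      simpa [Pi.mul_def] using h1
    have hint : IntervalIntegrable
        (fun t => ‖g t‖ ^ 2 + t * (2 * ⟪g t, deriv g t⟫)) volume 0 S :=
      (hf1c.add (continuous_id'.mul (continuous_const.mul hinnc))).intervalIntegrable _ _
    have h2 := integral_eq_sub_of_hasDerivAt hD hint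
    rw [h2, hgz S (by rw [abs_of_pos hS])]
    simp
  -- nonnegativity of the completed square
  have key2 : (0:ℝ) ≤ ∫ t in (0:ℝ)..S,
      (‖deriv g t‖ ^ 2 * t ^ 2 + t * ⟪g t, deriv g t⟫ + 4⁻¹ * ‖g t‖ ^ 2) := by
    have : ∀ t : ℝ, ‖deriv g t‖ ^ 2 * t ^ 2 + t * ⟪g t, deriv g t⟫ + 4⁻¹ * ‖g t‖ ^ 2
        = ‖t • deriv g t + (2⁻¹ : ℝ) • g t‖ ^ 2 := by
      intro t
      rw [norm_add_sq_real, real_inner_smul_left, real_inner_smul_right,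
        norm_smul, norm_smul, mul_pow, mul_pow, real_inner_comm]
      have ht : |t| ^ 2 = t ^ 2 := sq_abs t
      simp only [Real.norm_eq_abs, ht]
      norm_num
      ring
    calc (0:ℝ) ≤ ∫ t in (0:ℝ)..S, ‖t • deriv g t + (2⁻¹ : ℝ) • g t‖ ^ 2 := by
          apply intervalIntegral.integral_nonneg hS.le
          intro t _
          positivity
      _ = _ := by
          apply intervalIntegral.integral_congr
          intro t _
          simpa using (this t).symm
  -- derive the real interval inequality
  have hi1 : IntervalIntegrable (fun t : ℝ => ‖g t‖ ^ 2) volume 0 S :=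
    hf1c.intervalIntegrable _ _
  have hi2 : IntervalIntegrable (fun t : ℝ => ‖deriv g t‖ ^ 2 * t ^ 2) volume 0 S :=
    hf2c.intervalIntegrable _ _
  have hi3 : IntervalIntegrable (fun t : ℝ => t * ⟪g t, deriv g t⟫) volume 0 S :=
    (continuous_id'.mul hinnc).intervalIntegrable _ _
  have e1 : ∫ t in (0:ℝ)..S, t * ⟪g t, deriv g t⟫
      = -(2⁻¹ * ∫ t in (0:ℝ)..S, ‖g t‖ ^ 2) := by
    have := key1
    rw [intervalIntegral.integral_add hi1
      (by exact (continuous_id'.mul (continuous_const.mul hinnc)).intervalIntegrable _ _ :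
        IntervalIntegrable (fun t : ℝ => t * (2 * ⟪g t, deriv g t⟫)) volume 0 S)] at this
    have h4 : ∫ t in (0:ℝ)..S, t * (2 * ⟪g t, deriv g t⟫)
        = 2 * ∫ t in (0:ℝ)..S, t * ⟪g t, deriv g t⟫ := by
      rw [← intervalIntegral.integral_const_mul]
      apply intervalIntegral.integral_congr
      intro t _; ring
    rw [h4] at this
    linarith
  have key3 : ∫ t in (0:ℝ)..S, ‖g t‖ ^ 2
      ≤ 4 * ∫ t in (0:ℝ)..S, ‖deriv g t‖ ^ 2 * t ^ 2 := by
    rw [intervalIntegral.integral_add (hi2.add hi3) (hi1.const_mul _),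
      intervalIntegral.integral_add hi2 hi3, e1,
      intervalIntegral.integral_const_mul] at key2
    linarith
  -- convert lintegrals to the interval integrals
  have habs : ∀ r : ℝ, r ∈ Ioi S → S ≤ |r| := fun r hr => le_trans (le_of_lt hr) (le_abs_self r)
  have hL : ∫⁻ r in Ioi (0:ℝ), ENNReal.ofReal (‖g r‖ ^ 2)
      = ENNReal.ofReal (∫ t in (0:ℝ)..S, ‖g t‖ ^ 2) := by
    rw [← Ioc_union_Ioi_eq_Ioi hS.le, lintegral_union measurableSet_Ioi Ioc_disjoint_Ioi_same]
    have hz : ∫⁻ r in Ioi S, ENNReal.ofReal (‖g r‖ ^ 2) = 0 := by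
      rw [setLIntegral_congr_fun measurableSet_Ioi
        (fun r hr => by rw [hgz r (habs r hr)])]
      simp
    rw [hz, add_zero, intervalIntegral.integral_of_le hS.le,
      ← ofReal_integral_eq_lintegral_ofReal hi1.1
        (ae_of_all _ (fun t => sq_nonneg _))]
  have hR2 : ∫⁻ r in Ioi (0:ℝ), ENNReal.ofReal (‖deriv g r‖ ^ 2 * r ^ 2)
      = ENNReal.ofReal (∫ t in (0:ℝ)..S, ‖deriv g t‖ ^ 2 * t ^ 2) := by
    rw [← Ioc_union_Ioi_eq_Ioi hS.le, lintegral_union measurableSet_Ioi Ioc_disjoint_Ioi_same]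
    have hz : ∫⁻ r in Ioi S, ENNReal.ofReal (‖deriv g r‖ ^ 2 * r ^ 2) = 0 := by
      rw [setLIntegral_congr_fun measurableSet_Ioi
        (fun r hr => by rw [hg'z r (habs r hr)])]
      simp
    rw [hz, add_zero, intervalIntegral.integral_of_le hS.le,
      ← ofReal_integral_eq_lintegral_ofReal hi2.1
        (ae_of_all _ (fun t => mul_nonneg (sq_nonneg _) (sq_nonneg _)))]
  rw [hL, hR2]
  calc ENNReal.ofReal (∫ t in (0:ℝ)..S, ‖g t‖ ^ 2)
      ≤ ENNReal.ofReal (4 * ∫ t in (0:ℝ)..S, ‖deriv g t‖ ^ 2 * t ^ 2) :=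
        ENNReal.ofReal_le_ofReal key3
    _ = 4 * ENNReal.ofReal (∫ t in (0:ℝ)..S, ‖deriv g t‖ ^ 2 * t ^ 2) := by
        rw [ENNReal.ofReal_mul (by norm_num)]
        norm_num

/-- **Hardy's inequality in ℝ³.**
For every smooth compactly supported `u : ℝ³ → ℂ`,
`∫ |∇u|² ≥ (1/4) ∫ |u(x)|²/|x|² dx`. -/
theorem hardy_inequality (u : EuclideanSpace ℝ (Fin 3) → ℂ)
    (hu : ContDiff ℝ (⊤ : ℕ∞) u) (hsupp : HasCompactSupport u) :
    (1 / 4) * ∫ x : EuclideanSpace ℝ (Fin 3), ‖u x‖ ^ 2 / ‖x‖ ^ 2 ≤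
      ∫ x : EuclideanSpace ℝ (Fin 3), ‖fderiv ℝ u x‖ ^ 2 := by
  let E := EuclideanSpace ℝ (Fin 3)
  have hdim : Module.finrank ℝ E = 3 := finrank_euclideanSpace_fin
  set F : E → ℝ≥0∞ := fun x => ENNReal.ofReal (‖u x‖ ^ 2 / ‖x‖ ^ 2) with hF
  set G : E → ℝ≥0∞ := fun x => ENNReal.ofReal (‖fderiv ℝ u x‖ ^ 2) with hG
  have huc : Continuous u := hu.continuous
  have hduc : Continuous (fderiv ℝ u) := hu.continuous_fderiv (by simp)
  have hFm : Measurable F :=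
    (((huc.norm.pow 2).measurable).div
      ((continuous_norm.pow 2).measurable)).ennreal_ofReal
  have hGm : Measurable G := ((hduc.norm.pow 2).measurable).ennreal_ofReal
  -- polar coordinates
  have polar : ∀ Φ : E → ℝ≥0∞, Measurable Φ →
      ∫⁻ x, Φ x = ∫⁻ ω : Metric.sphere (0:E) 1, ∫⁻ r in Ioi (0:ℝ),
        ENNReal.ofReal (r ^ 2) * Φ (r • (ω:E)) ∂volume
          ∂(volume : Measure E).toSphere := by
    intro Φ hΦ
    have mp := (volume : Measure E).measurePreserving_homeomorphUnitSphereProd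
    rw [hdim] at mp
    have hsm : Measurable fun p : Metric.sphere (0:E) 1 × Ioi (0:ℝ) =>
        Φ (p.2.1 • p.1.1) :=
      hΦ.comp ((measurable_subtype_coe.comp measurable_snd).smul
        (measurable_subtype_coe.comp measurable_fst))
    calc ∫⁻ x, Φ x ∂(volume : Measure E)
        = ∫⁻ x in ({0}ᶜ : Set E), Φ x := by
          rw [restrict_compl_singleton]
      _ = ∫⁻ x : ({0}ᶜ : Set E), Φ (x : E) ∂(volume.comap Subtype.val) :=
          (lintegral_subtype_comap (measurableSet_singleton 0).compl _).symm
      _ = ∫⁻ p : Metric.sphere (0:E) 1 × Ioi (0:ℝ), Φ (p.2.1 • p.1.1)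
            ∂((volume : Measure E).toSphere.prod (Measure.volumeIoiPow (3 - 1))) := by
          rw [← mp.lintegral_comp hsm]
          refine lintegral_congr fun x => ?_
          have h1 := congrArg Subtype.val
            ((homeomorphUnitSphereProd E).symm_apply_apply x)
          rw [homeomorphUnitSphereProd_symm_apply_coe] at h1
          simp only [h1]
      _ = ∫⁻ ω : Metric.sphere (0:E) 1, ∫⁻ r : Ioi (0:ℝ), Φ (r.1 • ω.1)
            ∂(Measure.volumeIoiPow (3 - 1)) ∂(volume : Measure E).toSphere :=
          lintegral_prod _ hsm.aemeasurable
      _ = _ := by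
          refine lintegral_congr fun ω => ?_
          have hfun : Measurable fun r : Ioi (0:ℝ) => Φ ((r : ℝ) • (ω : E)) :=
            hΦ.comp (measurable_subtype_coe.smul measurable_const)
          rw [Measure.volumeIoiPow, lintegral_withDensity_eq_lintegral_mul _
            (measurable_subtype_coe.pow_const _).ennreal_ofReal hfun]
          simp only [Pi.mul_apply]
          exact lintegral_subtype_comap measurableSet_Ioi
            (fun r => ENNReal.ofReal (r ^ 2) * Φ (r • (ω:E)))
  -- main lintegral estimate via 1D Hardy on rays
  have hmain : ∫⁻ x, F x ≤ 4 * ∫⁻ x, G x := by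
    rw [polar F hFm, polar G hGm, ← lintegral_const_mul' 4 _ (by norm_num)]
    refine lintegral_mono fun ω => ?_
    set g : ℝ → ℂ := fun r => u (r • (ω:E)) with hg
    have hωn : ‖(ω:E)‖ = 1 := mem_sphere_zero_iff_norm.1 ω.2
    have hgcd : ContDiff ℝ (⊤ : ℕ∞) g := hu.comp (contDiff_id.smul contDiff_const)
    have hgsupp : HasCompactSupport g := by
      obtain ⟨R, hR⟩ := hsupp.isBounded.subset_closedBall 0
      apply HasCompactSupport.intro (isCompact_Icc (a := -R) (b := R))
      intro r hr
      have hnot : (r • (ω:E)) ∉ tsupport u := by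
        intro hmem
        have h2 := hR hmem
        rw [mem_closedBall, dist_zero_right, norm_smul, hωn, mul_one,
          Real.norm_eq_abs] at h2
        exact hr (abs_le.1 h2)
      show u (r • (ω:E)) = 0
      exact image_eq_zero_of_notMem_tsupport hnot
    have hgderiv : ∀ r : ℝ, deriv g r = fderiv ℝ u (r • (ω:E)) (ω:E) := by
      intro r
      have h1 : HasDerivAt (fun s : ℝ => s • (ω:E)) (ω:E) r := by
        simpa using (hasDerivAt_id r).smul_const (ω:E)
      exact ((hu.differentiable (by simp) (r • (ω:E))).hasFDerivAt.comp_hasDerivAt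
        r h1).deriv
    have h1d := hardy1D g hgcd hgsupp
    calc ∫⁻ r in Ioi (0:ℝ), ENNReal.ofReal (r ^ 2) * F (r • (ω:E))
        = ∫⁻ r in Ioi (0:ℝ), ENNReal.ofReal (‖g r‖ ^ 2) := by
          refine setLIntegral_congr_fun measurableSet_Ioi
            (fun r hr => ?_)
          have hr0 : (0:ℝ) < r := hr
          have hnrm : ‖r • (ω:E)‖ = r := by
            rw [norm_smul, hωn, mul_one, Real.norm_eq_abs, abs_of_pos hr0]
          rw [hF]
          simp only
          rw [hnrm, ← ENNReal.ofReal_mul (sq_nonneg r)]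
          congr 1
          field_simp
          rfl
      _ ≤ 4 * ∫⁻ r in Ioi (0:ℝ), ENNReal.ofReal (‖deriv g r‖ ^ 2 * r ^ 2) := h1d
      _ ≤ 4 * ∫⁻ r in Ioi (0:ℝ), ENNReal.ofReal (r ^ 2) * G (r • (ω:E)) := by
          refine mul_le_mul_right (lintegral_mono fun r => ?_) _
          rw [hG]
          simp only
          rw [mul_comm (‖deriv g r‖ ^ 2), ENNReal.ofReal_mul (sq_nonneg r)]
          refine mul_le_mul_right (ENNReal.ofReal_le_ofReal ?_) _
          have hle : ‖deriv g r‖ ≤ ‖fderiv ℝ u (r • (ω:E))‖ := by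
            rw [hgderiv r]
            calc ‖fderiv ℝ u (r • (ω:E)) (ω:E)‖
                ≤ ‖fderiv ℝ u (r • (ω:E))‖ * ‖(ω:E)‖ :=
                  (fderiv ℝ u (r • (ω:E))).le_opNorm _
              _ = ‖fderiv ℝ u (r • (ω:E))‖ := by rw [hωn, mul_one]
          exact pow_le_pow_left₀ (norm_nonneg _) hle 2
  -- convert back to Bochner integrals
  have hGsupp : HasCompactSupport fun x : E => ‖fderiv ℝ u x‖ ^ 2 :=
    (hsupp.fderiv (𝕜 := ℝ)).comp_left (g := fun A : E →L[ℝ] ℂ => ‖A‖ ^ 2) (by simp)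
  have hGint : Integrable (fun x : E => ‖fderiv ℝ u x‖ ^ 2) :=
    (hduc.norm.pow 2).integrable_of_hasCompactSupport hGsupp
  have hGeq : ∫⁻ x, G x = ENNReal.ofReal (∫ x, ‖fderiv ℝ u x‖ ^ 2) :=
    (ofReal_integral_eq_lintegral_ofReal hGint
      (ae_of_all _ fun x => sq_nonneg _)).symm
  have hGnn : 0 ≤ ∫ x, ‖fderiv ℝ u x‖ ^ 2 :=
    integral_nonneg fun x => sq_nonneg _
  have hFfin : ∫⁻ x, F x < ⊤ :=
    lt_of_le_of_lt hmain
      (by rw [hGeq]; exact ENNReal.mul_lt_top (by norm_num) ENNReal.ofReal_lt_top)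
  have hFnn : ∀ x : E, 0 ≤ ‖u x‖ ^ 2 / ‖x‖ ^ 2 :=
    fun x => div_nonneg (sq_nonneg _) (sq_nonneg _)
  have hFaesm : AEStronglyMeasurable (fun x : E => ‖u x‖ ^ 2 / ‖x‖ ^ 2) volume :=
    (((huc.norm.pow 2).measurable).div
      ((continuous_norm.pow 2).measurable)).aestronglyMeasurable
  have hFeq : ∫ x, ‖u x‖ ^ 2 / ‖x‖ ^ 2 = (∫⁻ x, F x).toReal := by
    rw [integral_eq_lintegral_of_nonneg_ae (ae_of_all _ hFnn) hFaesm]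
  have hfinal : (∫⁻ x, F x).toReal ≤ 4 * ∫ x, ‖fderiv ℝ u x‖ ^ 2 := by
    have h1 : (∫⁻ x, F x).toReal
        ≤ ((4 : ℝ≥0∞) * ENNReal.ofReal (∫ x, ‖fderiv ℝ u x‖ ^ 2)).toReal := by
      refine ENNReal.toReal_mono ?_ ?_
      · exact (ENNReal.mul_lt_top (by norm_num) ENNReal.ofReal_lt_top).ne
      · rw [← hGeq]; exact hmain
    rwa [ENNReal.toReal_mul, ENNReal.toReal_ofReal hGnn,
      (by norm_num : ((4:ℝ≥0∞)).toReal = (4:ℝ))] at h1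
  rw [hFeq]
  linarith
end

section
/- (Fefferman–de la Llave representation of the Coulomb kernel.) For all x, y ∈ ℝ³ with x ≠ y, 1/|x − y| = (1/π) ∫₀^∞ r^{-5} · vol( B(x, r) ∩ B(y, r) ) dr, where B(z, r) denotes the open Euclidean ball of radius r centered at z and vol denotes three-dimensional Lebesgue measure. -/
/-!
The volume of the lens `B(x, r) ∩ B(y, r)` depends only on `d = |x - y|`, since an isometry of
`ℝ³` carries one pair of centres to the other and preserves volume. For centres `0` and `d e₀`,
the slice of the lens at abscissa `t` is a disc of squared radius `r² - max(t², (t - d)²)`, so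
Cavalieri's principle gives the volume `π (2r - d)² (4r + d) / 12` for `r > d / 2` (and `0`
otherwise). Integrating this against `r⁻⁵` is elementary and gives `π / d`.
-/

open MeasureTheory Metric Set Real Filter

section Isometry

variable {E : Type*} [NormedAddCommGroup E] [InnerProductSpace ℝ E]

theorem exists_isometryEquiv_apply_eq_of_dist_eq {x y x' y' : E} (h : dist x y = dist x' y') :
    ∃ e : E ≃ᵢ E, e x = x' ∧ e y = y' := by
  have hnorm : ‖y - x‖ = ‖y' - x'‖ := by
    rw [← dist_eq_norm, ← dist_eq_norm, dist_comm, h, dist_comm]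
  let ρ := Submodule.reflection (ℝ ∙ ((y - x) - (y' - x')))ᗮ
  refine ⟨((IsometryEquiv.subRight x).trans ρ.toIsometryEquiv).trans
    (IsometryEquiv.addRight x'), ?_, ?_⟩
  · simp
  · simp [ρ, Submodule.reflection_sub hnorm]

variable [FiniteDimensional ℝ E] [MeasurableSpace E] [BorelSpace E]

theorem IsometryEquiv.measurePreserving_volume (e : E ≃ᵢ E) : MeasurePreserving e := by
  simpa only [InnerProductSpace.euclideanHausdorffMeasure_eq_volume] using
    e.measurePreserving_euclideanHausdorffMeasure (Module.finrank ℝ E)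

theorem volume_ball_inter_ball_congr {x y x' y' : E} (h : dist x y = dist x' y') (r : ℝ) :
    volume (ball x r ∩ ball y r) = volume (ball x' r ∩ ball y' r) := by
  obtain ⟨e, rfl, rfl⟩ := exists_isometryEquiv_apply_eq_of_dist_eq h
  have hs : MeasurableSet (ball (e x) r ∩ ball (e y) r) :=
    measurableSet_ball.inter measurableSet_ball
  simpa [e.preimage_ball] using e.measurePreserving_volume.measure_preimage hs.nullMeasurableSet

end Isometry

theorem volume_setOf_sq_add_sq_lt (c : ℝ) :
    volume {w : Fin 2 → ℝ | w 0 ^ 2 + w 1 ^ 2 < c} = ENNReal.ofReal (π * c) := by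
  rcases le_or_gt c 0 with hc | hc
  · have hempty : {w : Fin 2 → ℝ | w 0 ^ 2 + w 1 ^ 2 < c} = ∅ := by
      ext w
      simp only [mem_ofPred_eq, mem_empty_iff_false, iff_false, not_lt]
      exact hc.trans (by positivity)
    rw [hempty, measure_empty,
      ENNReal.ofReal_of_nonpos (mul_nonpos_of_nonneg_of_nonpos pi_pos.le hc)]
  · have hdisk :
        {w : Fin 2 → ℝ | w 0 ^ 2 + w 1 ^ 2 < c} = WithLp.toLp 2 ⁻¹' ball 0 √c := by
      ext w
      simp [EuclideanSpace.ball_zero_eq _ (sqrt_nonneg c), sq_sqrt hc.le, Fin.sum_univ_two]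
    rw [hdisk, (PiLp.volume_preserving_toLp (Fin 2)).measure_preimage
      measurableSet_ball.nullMeasurableSet, EuclideanSpace.volume_ball_fin_two,
      ← ENNReal.ofReal_pow (sqrt_nonneg c), sq_sqrt hc.le, ← ENNReal.ofReal_mul hc.le, mul_comm]

theorem EuclideanSpace.volume_setOf_sq_add_sq_lt_fin_three {f : ℝ → ℝ} (hf : Measurable f) :
    volume {z : EuclideanSpace ℝ (Fin 3) | z 1 ^ 2 + z 2 ^ 2 < f (z 0)} =
      ∫⁻ t, ENNReal.ofReal (π * f t) := by
  let U := {p : ℝ × (Fin 2 → ℝ) | p.2 0 ^ 2 + p.2 1 ^ 2 < f p.1}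
  have hU : MeasurableSet U := measurableSet_lt (by fun_prop) (by fun_prop)
  have hpre : {z : EuclideanSpace ℝ (Fin 3) | z 1 ^ 2 + z 2 ^ 2 < f (z 0)} =
      WithLp.ofLp ⁻¹' (MeasurableEquiv.piFinSuccAbove (fun _ : Fin 3 => ℝ) 0 ⁻¹' U) :=
    rfl
  rw [hpre, (PiLp.volume_preserving_ofLp (Fin 3)).measure_preimage
      (hU.preimage (MeasurableEquiv.measurable _)).nullMeasurableSet,
    (volume_preserving_piFinSuccAbove (fun _ : Fin 3 => ℝ) 0).measure_preimage
      hU.nullMeasurableSet,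
    Measure.volume_eq_prod, Measure.prod_apply hU]
  simp only [U, preimage_ofPred_eq, volume_setOf_sq_add_sq_lt]

theorem lintegral_ofReal_eq_ofReal_intervalIntegral {f : ℝ → ℝ} {a b : ℝ} (hab : a ≤ b)
    (hf : IntegrableOn f (Icc a b)) (hpos : ∀ t ∈ Icc a b, 0 ≤ f t)
    (hneg : ∀ t ∉ Icc a b, f t ≤ 0) :
    ∫⁻ t, ENNReal.ofReal (f t) = ENNReal.ofReal (∫ t in a..b, f t) := by
  have hsupp : (fun t => ENNReal.ofReal (f t)).support ⊆ Icc a b := fun t ht => by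
    by_contra h
    exact ht (ENNReal.ofReal_of_nonpos (hneg t h))
  rw [← setLIntegral_eq_of_support_subset hsupp, ← ofReal_integral_eq_lintegral_ofReal hf
      ((ae_restrict_iff' measurableSet_Icc).2 (.of_forall hpos)),
    integral_Icc_eq_integral_Ioc, intervalIntegral.integral_of_le hab]

theorem ball_zero_inter_ball_single_eq {d r : ℝ} (hr : 0 < r) :
    ball (0 : EuclideanSpace ℝ (Fin 3)) r ∩ ball (EuclideanSpace.single 0 d) r =
      {z | z 1 ^ 2 + z 2 ^ 2 < r ^ 2 - max (z 0 ^ 2) ((z 0 - d) ^ 2)} := by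
  ext z
  simp only [mem_inter_iff, mem_ball, dist_zero_right, EuclideanSpace.norm_eq, norm_eq_abs,
    sq_abs, Fin.sum_univ_three, sqrt_lt' hr, EuclideanSpace.dist_eq, PiLp.single_apply, dist_eq,
    ↓reduceIte, one_ne_zero, sub_zero, Fin.reduceEq, lt_sub_iff_add_lt, add_max, sup_lt_iff,
    mem_ofPred_eq]
  constructor <;> intro h <;> constructor <;> linarith [h.1, h.2]

theorem integral_sq_sub_max_sq {d r : ℝ} (hd : 0 ≤ d) (hr : d / 2 ≤ r) :
    ∫ t in (d - r)..r, (r ^ 2 - max (t ^ 2) ((t - d) ^ 2)) =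
      (2 * r - d) ^ 2 * (4 * r + d) / 12 := by
  have hleft : ∫ t in (d - r)..(d / 2), (r ^ 2 - max (t ^ 2) ((t - d) ^ 2)) =
      ∫ t in (d - r)..(d / 2), (r ^ 2 - (t - d) ^ 2) := by
    refine intervalIntegral.integral_congr fun t ht => ?_
    rw [uIcc_of_le (by linarith)] at ht
    simp only [max_eq_right (show t ^ 2 ≤ (t - d) ^ 2 by nlinarith [ht.2])]
  have hright : ∫ t in (d / 2)..r, (r ^ 2 - max (t ^ 2) ((t - d) ^ 2)) =
      ∫ t in (d / 2)..r, (r ^ 2 - t ^ 2) := by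
    refine intervalIntegral.integral_congr fun t ht => ?_
    rw [uIcc_of_le hr] at ht
    simp only [max_eq_left (show (t - d) ^ 2 ≤ t ^ 2 by nlinarith [ht.1])]
  rw [← intervalIntegral.integral_add_adjacent_intervals (b := d / 2)
      (Continuous.intervalIntegrable (by fun_prop) _ _)
      (Continuous.intervalIntegrable (by fun_prop) _ _),
    hleft, hright]
  simp [intervalIntegral.integral_comp_sub_right (fun t => r ^ 2 - t ^ 2)]
  ring

/-- Twice the volume `π h² (3r - h) / 3` of a spherical cap of height `h = r - d / 2`. -/
noncomputable def lensVolume (d r : ℝ) : ℝ :=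
  if d / 2 < r then π * (2 * r - d) ^ 2 * (4 * r + d) / 12 else 0

theorem lensVolume_nonneg {d : ℝ} (hd : 0 ≤ d) (r : ℝ) : 0 ≤ lensVolume d r := by
  unfold lensVolume
  split_ifs with hr
  · have : 0 ≤ 4 * r + d := by linarith
    positivity
  · exact le_rfl

theorem volume_ball_zero_inter_ball_single {d r : ℝ} (hd : 0 ≤ d) (hr : 0 < r) :
    volume (ball (0 : EuclideanSpace ℝ (Fin 3)) r ∩ ball (EuclideanSpace.single 0 d) r) =
      ENNReal.ofReal (lensVolume d r) := by
  rw [ball_zero_inter_ball_single_eq hr, EuclideanSpace.volume_setOf_sq_add_sq_lt_fin_three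
    (f := fun t => r ^ 2 - max (t ^ 2) ((t - d) ^ 2)) (by fun_prop), lensVolume]
  split_ifs with hdr
  · have hpos : ∀ t ∈ Icc (d - r) r, 0 ≤ π * (r ^ 2 - max (t ^ 2) ((t - d) ^ 2)) := by
      rintro t ⟨ht₁, ht₂⟩
      exact mul_nonneg pi_pos.le (sub_nonneg.2 (max_le (by nlinarith) (by nlinarith)))
    have hneg : ∀ t ∉ Icc (d - r) r, π * (r ^ 2 - max (t ^ 2) ((t - d) ^ 2)) ≤ 0 := by
      intro t ht
      refine mul_nonpos_of_nonneg_of_nonpos pi_pos.le (sub_nonpos.2 ?_)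
      rcases not_and_or.1 ht with ht | ht
      · exact le_max_of_le_right (by nlinarith [not_le.1 ht])
      · exact le_max_of_le_left (by nlinarith [not_le.1 ht])
    rw [lintegral_ofReal_eq_ofReal_intervalIntegral (by linarith)
      (Continuous.integrableOn_Icc (by fun_prop)) hpos hneg, intervalIntegral.integral_const_mul,
      integral_sq_sub_max_sq hd hdr.le]
    congr 1
    ring
  · rw [ENNReal.ofReal_zero]
    refine (lintegral_congr fun t => ENNReal.ofReal_of_nonpos ?_).trans lintegral_zero
    refine mul_nonpos_of_nonneg_of_nonpos pi_pos.le (sub_nonpos.2 ?_)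
    -- every point is at distance at least `d / 2` from one of the two centres
    nlinarith [not_lt.1 hdr, le_max_left (t ^ 2) ((t - d) ^ 2),
      le_max_right (t ^ 2) ((t - d) ^ 2), sq_nonneg (t - d / 2)]

theorem volume_ball_inter_ball_eq_lensVolume (x y : EuclideanSpace ℝ (Fin 3)) {r : ℝ}
    (hr : 0 < r) :
    volume (ball x r ∩ ball y r) = ENNReal.ofReal (lensVolume (dist x y) r) := by
  rw [volume_ball_inter_ball_congr (x' := 0) (y' := EuclideanSpace.single 0 (dist x y)) ?_ r,
    volume_ball_zero_inter_ball_single dist_nonneg hr]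
  simp

theorem integral_lensVolume_div_pow_five {d : ℝ} (hd : 0 < d) :
    ∫ r in Ioi 0, lensVolume d r / r ^ 5 = π / d := by
  let F : ℝ → ℝ := fun r =>
    π * (-4 / 3 * r⁻¹ + d / 2 * r⁻¹ ^ 2 - d ^ 3 / 48 * r⁻¹ ^ 4)
  have hF : ∀ r ∈ Ici (d / 2),
      HasDerivAt F (π * (2 * r - d) ^ 2 * (4 * r + d) / 12 / r ^ 5) r := by
    intro r hr
    have hinv := hasDerivAt_inv (show 0 < r by linarith [mem_Ici.1 hr]).ne'
    refine ((((hinv.const_mul (-4 / 3)).add ((hinv.pow 2).const_mul (d / 2))).sub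
      ((hinv.pow 4).const_mul (d ^ 3 / 48))).const_mul π).congr_deriv ?_
    norm_num
    field_simp
    ring
  have hnonneg : ∀ r ∈ Ioi (d / 2), 0 ≤ π * (2 * r - d) ^ 2 * (4 * r + d) / 12 / r ^ 5 := by
    intro r hr
    have : 0 < r := by linarith [mem_Ioi.1 hr]
    have : 0 ≤ 4 * r + d := by linarith
    positivity
  have hlim : Tendsto F atTop (nhds 0) := by
    have h := tendsto_inv_atTop_zero (𝕜 := ℝ)
    simpa [F] using ((((h.const_mul (-4 / 3)).add ((h.pow 2).const_mul (d / 2))).sub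
      ((h.pow 4).const_mul (d ^ 3 / 48))).const_mul π)
  have hind : (fun r => lensVolume d r / r ^ 5) =
      (Ioi (d / 2)).indicator fun r => π * (2 * r - d) ^ 2 * (4 * r + d) / 12 / r ^ 5 := by
    ext r
    simp [lensVolume, indicator, ite_div]
  rw [hind, setIntegral_indicator measurableSet_Ioi, Ioi_inter_Ioi, max_eq_right (by positivity),
    integral_Ioi_of_hasDerivAt_of_nonneg' hF hnonneg hlim]
  simp only [F]
  field_simp
  ring

/-- **Fefferman–de la Llave representation of the Coulomb kernel.**
For all `x ≠ y` in `ℝ³`,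
`1/|x − y| = (1/π) ∫₀^∞ r⁻⁵ vol(B(x,r) ∩ B(y,r)) dr`. -/
theorem fefferman_de_la_llave (x y : EuclideanSpace ℝ (Fin 3)) (hxy : x ≠ y) :
    ‖x - y‖⁻¹ = (1 / Real.pi) *
      ∫ r in Set.Ioi (0 : ℝ),
        (volume (Metric.ball x r ∩ Metric.ball y r)).toReal / r ^ 5 := by
  have hvol : ∀ r ∈ Ioi (0 : ℝ), (volume (ball x r ∩ ball y r)).toReal / r ^ 5 =
      lensVolume (dist x y) r / r ^ 5 := fun r hr => by
    rw [volume_ball_inter_ball_eq_lensVolume x y hr,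
      ENNReal.toReal_ofReal (lensVolume_nonneg dist_nonneg r)]
  rw [setIntegral_congr_fun measurableSet_Ioi hvol,
    integral_lensVolume_div_pow_five (dist_pos.2 hxy), dist_eq_norm]
  field_simp
end
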